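/- Let C be a completely regular code with covering radius 1 and intersection array {β₀; γ₁} in the Grassmann graph J_q(n,k), and suppose C has strength t as a q-ary design. Then for every i ∈ {0,…,t} the number of elements of C containing a fixed i-subspace equals [n−i choose k−i]_q · γ₁/(γ₁+β₀), and in particular this number is an integer. -/
import Mathlib

open Module

private lemma count_congr {F M N : Type*} [Field F] [AddCommGroup M] [Module F M]
    [AddCommGroup N] [Module F N] (e : M ≃ₗ[F] N) (d : ℕ) :
    {p : Submodule F M | finrank F p = d}.ncard
      = {p : Submodule F N | finrank F p = d}.ncard := by
  rw [← Nat.card_coe_set_eq, ← Nat.card_coe_set_eq]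
  exact Nat.card_congr (Equiv.subtypeEquiv (Submodule.orderIsoMapComap e).toEquiv
    (fun p => by
      rw [show ((Submodule.orderIsoMapComap e).toEquiv p : Submodule F N)
          = p.map (e : M →ₗ[F] N) from rfl]
      simp only [Set.mem_setOf_eq]
      rw [LinearEquiv.finrank_map_eq]))

private lemma comap_mkQ_finrank {F M : Type*} [Field F] [AddCommGroup M] [Module F M]
    [FiniteDimensional F M] (W : Submodule F M) (q : Submodule F (M ⧸ W)) :
    finrank F (q.comap W.mkQ) = finrank F q + finrank F W := by
  have hle : W ≤ q.comap W.mkQ := by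
    intro x hx
    have : W.mkQ x = 0 := by
      simpa [Submodule.mkQ_apply] using (Submodule.Quotient.mk_eq_zero W).mpr hx
    simp [Submodule.mem_comap, this]
  have hker : LinearMap.ker (W.mkQ ∘ₗ (q.comap W.mkQ).subtype)
      = W.comap (q.comap W.mkQ).subtype := by
    rw [LinearMap.ker_comp, Submodule.ker_mkQ]
  have hrange : LinearMap.range (W.mkQ ∘ₗ (q.comap W.mkQ).subtype) = q := by
    rw [LinearMap.range_comp, Submodule.range_subtype, Submodule.map_comap_eq,
      Submodule.range_mkQ, top_inf_eq]
  have h1 := LinearMap.finrank_range_add_finrank_ker (W.mkQ ∘ₗ (q.comap W.mkQ).subtype)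
  rw [hker, hrange] at h1
  have h2 : finrank F (W.comap (q.comap W.mkQ).subtype) = finrank F W :=
    (Submodule.comapSubtypeEquivOfLe hle).finrank_eq
  omega

private lemma interval_count {F M : Type*} [Field F] [AddCommGroup M] [Module F M]
    [FiniteDimensional F M] {W U : Submodule F M} (hWU : W ≤ U) {i u d dt : ℕ}
    (hW : finrank F W = i) (hU : finrank F U = u) (hdt : dt = d + i) :
    {T : Submodule F M | (W ≤ T ∧ T ≤ U) ∧ finrank F T = dt}.ncard
      = {p : Submodule F (Fin (u - i) → F) | finrank F p = d}.ncard := by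
  subst hW hU hdt
  set W' : Submodule F U := W.comap U.subtype with hW'def
  have hW'rank : finrank F W' = finrank F W :=
    (Submodule.comapSubtypeEquivOfLe hWU).finrank_eq
  have hWmap : W'.map U.subtype = W := by
    rw [hW'def, Submodule.map_comap_subtype, inf_eq_right.mpr hWU]
  -- step 1 : ambient interval ≃ submodules of U above W'
  have h1 : {T : Submodule F M | (W ≤ T ∧ T ≤ U) ∧ finrank F T = d + finrank F W}.ncard
      = {p : Submodule F U | W' ≤ p ∧ finrank F p = d + finrank F W}.ncard := by
    rw [← Nat.card_coe_set_eq, ← Nat.card_coe_set_eq]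
    refine (Nat.card_congr (Equiv.ofBijective
      (fun p : {p : Submodule F U | W' ≤ p ∧ finrank F p = d + finrank F W} =>
        (⟨p.1.map U.subtype, ⟨?_, ?_⟩, ?_⟩ :
          {T : Submodule F M | (W ≤ T ∧ T ≤ U) ∧ finrank F T = d + finrank F W}))
      ⟨?_, ?_⟩)).symm
    · calc W = W'.map U.subtype := hWmap.symm
        _ ≤ _ := Submodule.map_mono p.2.1
    · exact Submodule.map_subtype_le U p.1
    · rw [Submodule.finrank_map_subtype_eq]; exact p.2.2
    · intro p1 p2 h
      have h' := congrArg (fun s => Submodule.comap U.subtype s) (congrArg Subtype.val h)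
      simp only [Submodule.comap_map_eq, Submodule.ker_subtype, sup_bot_eq] at h'
      exact Subtype.ext h'
    · rintro ⟨T, ⟨hWT, hTU⟩, hrT⟩
      refine ⟨⟨T.comap U.subtype, ?_, ?_⟩, ?_⟩
      · exact Submodule.comap_mono hWT
      · have : (T.comap U.subtype).map U.subtype = T := by
          rw [Submodule.map_comap_subtype, inf_eq_right.mpr hTU]
        rw [← Submodule.finrank_map_subtype_eq, this]; exact hrT
      · apply Subtype.ext
        simp only
        rw [Submodule.map_comap_subtype, inf_eq_right.mpr hTU]
  -- step 2 : above W' ≃ submodules of the quotient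
  have h2 : {p : Submodule F U | W' ≤ p ∧ finrank F p = d + finrank F W}.ncard
      = {q : Submodule F (↥U ⧸ W') | finrank F q = d}.ncard := by
    rw [← Nat.card_coe_set_eq, ← Nat.card_coe_set_eq]
    have hle : ∀ q : Submodule F (↥U ⧸ W'), W' ≤ q.comap W'.mkQ := by
      intro q x hx
      have : W'.mkQ x = 0 := by
        simpa [Submodule.mkQ_apply] using (Submodule.Quotient.mk_eq_zero W').mpr hx
      simp [Submodule.mem_comap, this]
    refine (Nat.card_congr (Equiv.ofBijective
      (fun q : {q : Submodule F (↥U ⧸ W') | finrank F q = d} =>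
        (⟨q.1.comap W'.mkQ, hle q.1, ?_⟩ :
          {p : Submodule F U | W' ≤ p ∧ finrank F p = d + finrank F W}))
      ⟨?_, ?_⟩)).symm
    · rw [comap_mkQ_finrank, q.2, hW'rank]
    · intro q1 q2 h
      have h' := congrArg (fun s => Submodule.map W'.mkQ s) (congrArg Subtype.val h)
      simp only [Submodule.map_comap_eq, Submodule.range_mkQ, top_inf_eq] at h'
      exact Subtype.ext h'
    · rintro ⟨p, hW'p, hrp⟩
      refine ⟨⟨p.map W'.mkQ, ?_⟩, ?_⟩
      · have hcm : (p.map W'.mkQ).comap W'.mkQ = p := by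
          rw [Submodule.comap_map_eq, Submodule.ker_mkQ, sup_eq_left.mpr hW'p]
        have h3 := comap_mkQ_finrank W' (p.map W'.mkQ)
        rw [hcm] at h3
        show finrank F (p.map W'.mkQ) = d
        omega
      · apply Subtype.ext
        simp only
        rw [Submodule.comap_map_eq, Submodule.ker_mkQ, sup_eq_left.mpr hW'p]
  -- step 3 : quotient ≃ standard space
  have hq : finrank F (↥U ⧸ W') = finrank F U - finrank F W := by
    have := Submodule.finrank_quotient_add_finrank W'
    omega
  have e : (↥U ⧸ W') ≃ₗ[F] (Fin (finrank F U - finrank F W) → F) :=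
    LinearEquiv.ofFinrankEq _ _ (by rw [hq, Module.finrank_fin_fun])
  rw [h1, h2, count_congr e d]

private lemma count_pos (F : Type*) [Field F] [Fintype F] {m d : ℕ} (h : d ≤ m) :
    1 ≤ {p : Submodule F (Fin m → F) | finrank F p = d}.ncard := by
  have hli : LinearIndependent F fun j : Fin d => Pi.basisFun F (Fin m) (Fin.castLE h j) :=
    (Pi.basisFun F (Fin m)).linearIndependent.comp _ (Fin.castLE_injective h)
  have hne : {p : Submodule F (Fin m → F) | finrank F p = d}.Nonempty :=
    ⟨Submodule.span F (Set.range fun j : Fin d => Pi.basisFun F (Fin m) (Fin.castLE h j)),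
      by simp only [Set.mem_setOf_eq]; rw [finrank_span_eq_card hli]; simp⟩
  exact (Set.ncard_pos (Set.toFinite _)).mpr hne

private lemma fil_card {X : Type*} (s : Set X) (p : X → Prop) [Fintype ↥s]
    [DecidablePred p] :
    (s.toFinset.filter p).card = {x | x ∈ s ∧ p x}.ncard := by
  have hfin : {x | x ∈ s ∧ p x}.Finite := s.toFinite.subset (fun x hx => hx.1)
  rw [Set.ncard_eq_toFinset_card _ hfin]
  congr 1
  ext x
  simp [Set.Finite.mem_toFinset]


/-- Let `C` be a completely regular code with covering radius 1 and
intersection array `{β₀; γ₁}` in the Grassmann graph `J_q(n,k)`, and suppose `C` has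
strength `t` as a `q`-ary design (every `t`-subspace lies in the same number `λ` of
members of `C`). Then for every `i ≤ t` and every `i`-subspace `W`, the number of
members of `C` through `W` is the positive integer
`[n−i choose k−i]_q · γ₁/(γ₁+β₀)` — here `[n−i choose k−i]_q` is realized as the
number of `(k−i)`-subspaces of `F_q^{n−i}`. -/
theorem stmt18 (F : Type*) [Field F] [Fintype F] (n k t β₀ γ₁ lam : ℕ)
    (hkn : 2 * k ≤ n) (ht : t ≤ k) (hγ : 1 ≤ γ₁)
    (C : Set (Submodule F (Fin n → F)))
    (hCk : ∀ U ∈ C, Module.finrank F U = k)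
    (hβ₀ : ∀ U ∈ C,
      {W : Submodule F (Fin n → F) | W ∉ C ∧ Module.finrank F W = k ∧
        Module.finrank F (U ⊓ W : Submodule F (Fin n → F)) = k - 1}.ncard = β₀)
    (hγ₁ : ∀ U : Submodule F (Fin n → F), Module.finrank F U = k → U ∉ C →
      {W ∈ C | Module.finrank F (U ⊓ W : Submodule F (Fin n → F)) = k - 1}.ncard
        = γ₁)
    (hdes : ∀ W : Submodule F (Fin n → F), Module.finrank F W = t →
      {U ∈ C | W ≤ U}.ncard = lam) :
    ∀ i ≤ t, ∀ W : Submodule F (Fin n → F), Module.finrank F W = i →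
      1 ≤ {U ∈ C | W ≤ U}.ncard ∧
      {U ∈ C | W ≤ U}.ncard * (γ₁ + β₀) =
        {V : Submodule F (Fin (n - i) → F) |
          Module.finrank F V = k - i}.ncard * γ₁ := by
  classical
  have hk_n : k ≤ n := by omega
  intro i hit W hW
  have hik : i ≤ k := hit.trans ht
  have hin : i ≤ n := hik.trans hk_n
  letI : Fintype (Submodule F (Fin n → F)) := Fintype.ofFinite _
  have hranktop : finrank F (⊤ : Submodule F (Fin n → F)) = n := by
    rw [finrank_top]; exact Module.finrank_fin_fun F
  -- count of i-dimensional subspaces inside a k-dimensional one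
  have hIcount : ∀ V : Submodule F (Fin n → F), finrank F V = k →
      {x | x ∈ {W' : Submodule F (Fin n → F) | finrank F W' = i} ∧ x ≤ V}.ncard
        = {p : Submodule F (Fin (k - 0) → F) | finrank F p = i}.ncard := by
    intro V hV
    have hseteq : {x | x ∈ {W' : Submodule F (Fin n → F) | finrank F W' = i} ∧ x ≤ V}
        = {T : Submodule F (Fin n → F) |
            ((⊥ : Submodule F (Fin n → F)) ≤ T ∧ T ≤ V) ∧ finrank F T = i} := by
      ext T
      constructor
      · rintro ⟨h1, h2⟩; exact ⟨⟨bot_le, h2⟩, h1⟩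
      · rintro ⟨⟨-, h2⟩, h1⟩; exact ⟨h1, h2⟩
    rw [hseteq, interval_count bot_le (finrank_bot F _) hV (Nat.add_zero i).symm]
  -- Fact A : per-W' design count
  have factA : ∀ W' : Submodule F (Fin n → F), finrank F W' = i →
      {U | U ∈ C ∧ W' ≤ U}.ncard
          * {p : Submodule F (Fin (k - i) → F) | finrank F p = t - i}.ncard
        = {p : Submodule F (Fin (n - i) → F) | finrank F p = t - i}.ncard * lam := by
    intro W' hW'
    have h := Finset.card_mul_eq_card_mul (fun (U T : Submodule F (Fin n → F)) => T ≤ U)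
      (s := ({U | U ∈ C ∧ W' ≤ U} : Set (Submodule F (Fin n → F))).toFinset)
      (t := ({T | (W' ≤ T ∧ T ≤ (⊤ : Submodule F (Fin n → F))) ∧ finrank F T = t} :
          Set (Submodule F (Fin n → F))).toFinset)
      (m := {p : Submodule F (Fin (k - i) → F) | finrank F p = t - i}.ncard)
      (n := lam) ?_ ?_
    · rw [← Set.ncard_eq_toFinset_card', ← Set.ncard_eq_toFinset_card'] at h
      rw [h, interval_count le_top hW' hranktop (Nat.sub_add_cancel hit).symm]
    · intro U hU
      rw [Set.mem_toFinset] at hU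
      show ((({T | (W' ≤ T ∧ T ≤ (⊤ : Submodule F (Fin n → F))) ∧ finrank F T = t} :
          Set (Submodule F (Fin n → F))).toFinset.filter fun T => T ≤ U).card = _)
      rw [fil_card]
      have hseteq : {x | x ∈ {T : Submodule F (Fin n → F) |
            (W' ≤ T ∧ T ≤ (⊤ : Submodule F (Fin n → F))) ∧ finrank F T = t} ∧ x ≤ U}
          = {T : Submodule F (Fin n → F) | (W' ≤ T ∧ T ≤ U) ∧ finrank F T = t} := by
        ext T
        constructor
        · rintro ⟨⟨⟨h1, -⟩, h2⟩, h3⟩; exact ⟨⟨h1, h3⟩, h2⟩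
        · rintro ⟨⟨h1, h3⟩, h2⟩; exact ⟨⟨⟨h1, le_top⟩, h2⟩, h3⟩
      rw [hseteq, interval_count hU.2 hW' (hCk U hU.1) (Nat.sub_add_cancel hit).symm]
    · intro T hT
      rw [Set.mem_toFinset] at hT
      obtain ⟨⟨hWT, -⟩, hrT⟩ := hT
      show ((({U | U ∈ C ∧ W' ≤ U} : Set (Submodule F (Fin n → F))).toFinset.filter
          fun U => T ≤ U).card = lam)
      rw [fil_card]
      have hseteq : {x | x ∈ {U : Submodule F (Fin n → F) | U ∈ C ∧ W' ≤ U} ∧ T ≤ x}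
          = {U : Submodule F (Fin n → F) | U ∈ C ∧ T ≤ U} := by
        ext U
        constructor
        · rintro ⟨⟨h1, -⟩, h2⟩; exact ⟨h1, h2⟩
        · rintro ⟨h1, h2⟩; exact ⟨⟨h1, hWT.trans h2⟩, h2⟩
      rw [hseteq]
      exact hdes T hrT
  -- Fact B : edge counting
  have factB : C.ncard * β₀
      = {V : Submodule F (Fin n → F) | V ∉ C ∧ finrank F V = k}.ncard * γ₁ := by
    have h := Finset.card_mul_eq_card_mul
      (fun (U V : Submodule F (Fin n → F)) =>
        finrank F (U ⊓ V : Submodule F (Fin n → F)) = k - 1)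
      (s := C.toFinset)
      (t := ({V | V ∉ C ∧ finrank F V = k} : Set (Submodule F (Fin n → F))).toFinset)
      (m := β₀) (n := γ₁) ?_ ?_
    · rwa [← Set.ncard_eq_toFinset_card', ← Set.ncard_eq_toFinset_card'] at h
    · intro U hU
      rw [Set.mem_toFinset] at hU
      show ((({V | V ∉ C ∧ finrank F V = k} : Set (Submodule F (Fin n → F))).toFinset.filter
          fun V => finrank F (U ⊓ V : Submodule F (Fin n → F)) = k - 1).card = β₀)
      rw [fil_card]
      have hseteq : {x | x ∈ {V : Submodule F (Fin n → F) | V ∉ C ∧ finrank F V = k} ∧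
            finrank F (U ⊓ x : Submodule F (Fin n → F)) = k - 1}
          = {W : Submodule F (Fin n → F) | W ∉ C ∧ finrank F W = k ∧
            finrank F (U ⊓ W : Submodule F (Fin n → F)) = k - 1} := by
        ext V
        simp only [Set.mem_setOf_eq, and_assoc]
      rw [hseteq]
      exact hβ₀ U hU
    · intro V hV
      rw [Set.mem_toFinset] at hV
      show ((C.toFinset.filter
          fun U => finrank F (U ⊓ V : Submodule F (Fin n → F)) = k - 1).card = γ₁)
      rw [fil_card]
      have hseteq : {x | x ∈ C ∧ finrank F (x ⊓ V : Submodule F (Fin n → F)) = k - 1}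
          = {U : Submodule F (Fin n → F) | U ∈ C ∧
              finrank F (V ⊓ U : Submodule F (Fin n → F)) = k - 1} := by
        ext U
        constructor
        · rintro ⟨h1, h2⟩; exact ⟨h1, by rwa [inf_comm] at h2⟩
        · rintro ⟨h1, h2⟩; exact ⟨h1, by rwa [inf_comm] at h2⟩
      rw [hseteq]
      exact hγ₁ V hV.2 hV.1
  -- splitting all k-subspaces
  have hdisj : Disjoint C {V : Submodule F (Fin n → F) | V ∉ C ∧ finrank F V = k} := by
    rw [Set.disjoint_left]
    rintro V hV ⟨hV', -⟩
    exact hV' hV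
  have hsplit : {V : Submodule F (Fin n → F) | finrank F V = k}.ncard
      = C.ncard + {V : Submodule F (Fin n → F) | V ∉ C ∧ finrank F V = k}.ncard := by
    rw [← Set.ncard_union_eq hdisj (Set.toFinite _) (Set.toFinite _)]
    congr 1
    ext V
    simp only [Set.mem_setOf_eq, Set.mem_union]
    constructor
    · intro hV
      by_cases hVC : V ∈ C
      · exact Or.inl hVC
      · exact Or.inr ⟨hVC, hV⟩
    · rintro (hV | ⟨-, hV⟩)
      · exact hCk V hV
      · exact hV
  have hedge : C.ncard * (γ₁ + β₀)
      = {V : Submodule F (Fin n → F) | finrank F V = k}.ncard * γ₁ := by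
    calc C.ncard * (γ₁ + β₀) = C.ncard * γ₁ + C.ncard * β₀ := by ring
      _ = C.ncard * γ₁
          + {V : Submodule F (Fin n → F) | V ∉ C ∧ finrank F V = k}.ncard * γ₁ := by
        rw [factB]
      _ = (C.ncard + {V : Submodule F (Fin n → F) | V ∉ C ∧ finrank F V = k}.ncard) * γ₁ := by
        ring
      _ = {V : Submodule F (Fin n → F) | finrank F V = k}.ncard * γ₁ := by rw [← hsplit]
  -- Fact C : summing Fact A over all i-subspaces
  have factC : C.ncard * {p : Submodule F (Fin (k - 0) → F) | finrank F p = i}.ncard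
        * {p : Submodule F (Fin (k - i) → F) | finrank F p = t - i}.ncard
      = {W' : Submodule F (Fin n → F) | finrank F W' = i}.ncard
        * ({p : Submodule F (Fin (n - i) → F) | finrank F p = t - i}.ncard * lam) := by
    have hsum := Finset.sum_card_bipartiteAbove_eq_sum_card_bipartiteBelow
      (fun (W' U : Submodule F (Fin n → F)) => W' ≤ U)
      (s := ({W' | finrank F W' = i} : Set (Submodule F (Fin n → F))).toFinset)
      (t := C.toFinset)
    have hR : ∑ U ∈ C.toFinset,
        (Finset.bipartiteBelow (fun (W' U : Submodule F (Fin n → F)) => W' ≤ U)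
          (({W' | finrank F W' = i} : Set (Submodule F (Fin n → F))).toFinset) U).card
        = C.ncard * {p : Submodule F (Fin (k - 0) → F) | finrank F p = i}.ncard := by
      calc ∑ U ∈ C.toFinset,
          (Finset.bipartiteBelow (fun (W' U : Submodule F (Fin n → F)) => W' ≤ U)
            (({W' | finrank F W' = i} : Set (Submodule F (Fin n → F))).toFinset) U).card
          = ∑ _U ∈ C.toFinset,
            {p : Submodule F (Fin (k - 0) → F) | finrank F p = i}.ncard := by
            refine Finset.sum_congr rfl fun U hU => ?_
            rw [Set.mem_toFinset] at hU
            show ((({W' | finrank F W' = i} :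
                Set (Submodule F (Fin n → F))).toFinset.filter fun W' => W' ≤ U).card = _)
            rw [fil_card]
            exact hIcount U (hCk U hU)
        _ = C.ncard * {p : Submodule F (Fin (k - 0) → F) | finrank F p = i}.ncard := by
            rw [Finset.sum_const, smul_eq_mul, ← Set.ncard_eq_toFinset_card']
    have hL : ∑ W' ∈ ({W' | finrank F W' = i} : Set (Submodule F (Fin n → F))).toFinset,
        (Finset.bipartiteAbove (fun (W' U : Submodule F (Fin n → F)) => W' ≤ U)
          C.toFinset W').card
        = ∑ W' ∈ ({W' | finrank F W' = i} : Set (Submodule F (Fin n → F))).toFinset,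
          {U | U ∈ C ∧ W' ≤ U}.ncard := by
      refine Finset.sum_congr rfl fun W' _ => ?_
      show ((C.toFinset.filter fun U => W' ≤ U).card = _)
      exact fil_card C _
    have hkey : ∑ W' ∈ ({W' | finrank F W' = i} : Set (Submodule F (Fin n → F))).toFinset,
        {U | U ∈ C ∧ W' ≤ U}.ncard
        = C.ncard * {p : Submodule F (Fin (k - 0) → F) | finrank F p = i}.ncard := by
      rw [← hL, hsum, hR]
    calc C.ncard * {p : Submodule F (Fin (k - 0) → F) | finrank F p = i}.ncard
        * {p : Submodule F (Fin (k - i) → F) | finrank F p = t - i}.ncard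
        = (∑ W' ∈ ({W' | finrank F W' = i} : Set (Submodule F (Fin n → F))).toFinset,
            {U | U ∈ C ∧ W' ≤ U}.ncard)
          * {p : Submodule F (Fin (k - i) → F) | finrank F p = t - i}.ncard := by
          rw [hkey]
      _ = ∑ W' ∈ ({W' | finrank F W' = i} : Set (Submodule F (Fin n → F))).toFinset,
          ({p : Submodule F (Fin (n - i) → F) | finrank F p = t - i}.ncard * lam) := by
          rw [Finset.sum_mul]
          refine Finset.sum_congr rfl fun W' hW' => ?_
          rw [Set.mem_toFinset] at hW'
          exact factA W' hW'
      _ = {W' : Submodule F (Fin n → F) | finrank F W' = i}.ncard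
          * ({p : Submodule F (Fin (n - i) → F) | finrank F p = t - i}.ncard * lam) := by
          rw [Finset.sum_const, smul_eq_mul, ← Set.ncard_eq_toFinset_card']
  -- Fact D : Gaussian identity by double counting
  have factD : {V : Submodule F (Fin n → F) | finrank F V = k}.ncard
        * {p : Submodule F (Fin (k - 0) → F) | finrank F p = i}.ncard
      = {W' : Submodule F (Fin n → F) | finrank F W' = i}.ncard
        * {p : Submodule F (Fin (n - i) → F) | finrank F p = k - i}.ncard := by
    have h := Finset.card_mul_eq_card_mul
      (fun (V W' : Submodule F (Fin n → F)) => W' ≤ V)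
      (s := ({V | finrank F V = k} : Set (Submodule F (Fin n → F))).toFinset)
      (t := ({W' | finrank F W' = i} : Set (Submodule F (Fin n → F))).toFinset)
      (m := {p : Submodule F (Fin (k - 0) → F) | finrank F p = i}.ncard)
      (n := {p : Submodule F (Fin (n - i) → F) | finrank F p = k - i}.ncard) ?_ ?_
    · rwa [← Set.ncard_eq_toFinset_card', ← Set.ncard_eq_toFinset_card'] at h
    · intro V hV
      rw [Set.mem_toFinset] at hV
      show ((({W' | finrank F W' = i} :
          Set (Submodule F (Fin n → F))).toFinset.filter fun W' => W' ≤ V).card = _)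
      rw [fil_card]
      exact hIcount V hV
    · intro W' hW'
      rw [Set.mem_toFinset] at hW'
      show ((({V | finrank F V = k} :
          Set (Submodule F (Fin n → F))).toFinset.filter fun V => W' ≤ V).card = _)
      rw [fil_card]
      have hseteq : {x | x ∈ {V : Submodule F (Fin n → F) | finrank F V = k} ∧ W' ≤ x}
          = {T : Submodule F (Fin n → F) |
              (W' ≤ T ∧ T ≤ (⊤ : Submodule F (Fin n → F))) ∧ finrank F T = k} := by
        ext T
        constructor
        · rintro ⟨h1, h2⟩; exact ⟨⟨h2, le_top⟩, h1⟩
        · rintro ⟨⟨h2, -⟩, h1⟩; exact ⟨h1, h2⟩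
      rw [hseteq, interval_count le_top hW' hranktop (Nat.sub_add_cancel hik).symm]
  -- Final assembly
  have hA := factA W hW
  have hcKTpos : 0 < {p : Submodule F (Fin (k - i) → F) | finrank F p = t - i}.ncard :=
    count_pos F (Nat.sub_le_sub_right ht i)
  have hA1pos : 0 < {W' : Submodule F (Fin n → F) | finrank F W' = i}.ncard :=
    count_pos F hin
  have hcNKpos : 0 < {p : Submodule F (Fin (n - i) → F) | finrank F p = k - i}.ncard :=
    count_pos F (Nat.sub_le_sub_right hk_n i)
  have h5 : C.ncard * {p : Submodule F (Fin (k - 0) → F) | finrank F p = i}.ncard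
      = {W' : Submodule F (Fin n → F) | finrank F W' = i}.ncard
        * {U | U ∈ C ∧ W ≤ U}.ncard := by
    refine Nat.eq_of_mul_eq_mul_right hcKTpos ?_
    calc C.ncard * {p : Submodule F (Fin (k - 0) → F) | finrank F p = i}.ncard
        * {p : Submodule F (Fin (k - i) → F) | finrank F p = t - i}.ncard
        = {W' : Submodule F (Fin n → F) | finrank F W' = i}.ncard
          * ({p : Submodule F (Fin (n - i) → F) | finrank F p = t - i}.ncard * lam) := factC
      _ = {W' : Submodule F (Fin n → F) | finrank F W' = i}.ncard
          * ({U | U ∈ C ∧ W ≤ U}.ncard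
            * {p : Submodule F (Fin (k - i) → F) | finrank F p = t - i}.ncard) := by rw [hA]
      _ = {W' : Submodule F (Fin n → F) | finrank F W' = i}.ncard
          * {U | U ∈ C ∧ W ≤ U}.ncard
          * {p : Submodule F (Fin (k - i) → F) | finrank F p = t - i}.ncard := by ring
  have h6 : {W' : Submodule F (Fin n → F) | finrank F W' = i}.ncard
        * ({U | U ∈ C ∧ W ≤ U}.ncard * (γ₁ + β₀))
      = {W' : Submodule F (Fin n → F) | finrank F W' = i}.ncard
        * ({p : Submodule F (Fin (n - i) → F) | finrank F p = k - i}.ncard * γ₁) := by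
    calc {W' : Submodule F (Fin n → F) | finrank F W' = i}.ncard
          * ({U | U ∈ C ∧ W ≤ U}.ncard * (γ₁ + β₀))
        = ({W' : Submodule F (Fin n → F) | finrank F W' = i}.ncard
            * {U | U ∈ C ∧ W ≤ U}.ncard) * (γ₁ + β₀) := by ring
      _ = (C.ncard * {p : Submodule F (Fin (k - 0) → F) | finrank F p = i}.ncard)
            * (γ₁ + β₀) := by rw [h5]
      _ = (C.ncard * (γ₁ + β₀))
            * {p : Submodule F (Fin (k - 0) → F) | finrank F p = i}.ncard := by ring
      _ = ({V : Submodule F (Fin n → F) | finrank F V = k}.ncard * γ₁)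
            * {p : Submodule F (Fin (k - 0) → F) | finrank F p = i}.ncard := by rw [hedge]
      _ = ({V : Submodule F (Fin n → F) | finrank F V = k}.ncard
            * {p : Submodule F (Fin (k - 0) → F) | finrank F p = i}.ncard) * γ₁ := by ring
      _ = ({W' : Submodule F (Fin n → F) | finrank F W' = i}.ncard
            * {p : Submodule F (Fin (n - i) → F) | finrank F p = k - i}.ncard) * γ₁ := by
          rw [factD]
      _ = {W' : Submodule F (Fin n → F) | finrank F W' = i}.ncard
            * ({p : Submodule F (Fin (n - i) → F) | finrank F p = k - i}.ncard * γ₁) := by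
          ring
  have hfin : {U | U ∈ C ∧ W ≤ U}.ncard * (γ₁ + β₀)
      = {p : Submodule F (Fin (n - i) → F) | finrank F p = k - i}.ncard * γ₁ :=
    Nat.eq_of_mul_eq_mul_left hA1pos h6
  constructor
  · have hpos : 0 < {U | U ∈ C ∧ W ≤ U}.ncard * (γ₁ + β₀) := by
      rw [hfin]
      exact Nat.mul_pos hcNKpos hγ
    obtain hm | hm := Nat.eq_zero_or_pos ({U | U ∈ C ∧ W ≤ U}.ncard)
    · rw [hm] at hpos; simp at hpos
    · exact hm
  · exact hfin
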